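/- arXiv:1812.04591 — 2 statements merged into one kernel-verified Lean document; each statement's English description precedes it below -/
import Mathlib

section
/- Let y : [0,T] → [0,∞) be measurable and bounded, and suppose y(t) ≤ a + b ∫₀ᵗ y(s) ds + c ∫₀ᵗ (t−s)^{−3/4} y(s) ds + d ∫₀ᵗ (t−s)^{−1/2} y(s) ds for all t ∈ [0,T], with a,b,c,d ≥ 0. Then there exists a constant C depending only on b, c, d, T such that sup_{t∈[0,T]} y(t) ≤ C a. -/
open MeasureTheory intervalIntegral

namespace Stmt8Aux

open Set

lemma kernel_II {p : ℝ} (hp : -1 < p) (t u v : ℝ) :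
    IntervalIntegrable (fun s => (t - s) ^ p) volume u v := by
  have h := (intervalIntegrable_rpow' (a := t - u) (b := t - v) hp).comp_sub_left t
  simpa using h

lemma kernel_int {p : ℝ} (hp : -1 < p) {t u : ℝ} (hut : u ≤ t) :
    (∫ s in u..t, (t - s) ^ p) = (t - u) ^ (p + 1) / (p + 1) := by
  rw [show (fun s => (t - s) ^ p) = (fun x : ℝ => x ^ p) ∘ (fun s => t - s) from rfl]
  rw [show (∫ s in u..t, ((fun x : ℝ => x ^ p) ∘ (fun s => t - s)) s)
      = ∫ s in u..t, (fun x : ℝ => x ^ p) (t - s) from rfl]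
  rw [intervalIntegral.integral_comp_sub_left (fun x : ℝ => x ^ p) t]
  rw [sub_self]
  rw [integral_rpow (Or.inl hp), Real.zero_rpow (by linarith), sub_zero]

lemma yII {y : ℝ → ℝ} (hy : Measurable y) {u v U : ℝ} (hy0 : ∀ s, 0 ≤ y s)
    (hU : ∀ s ∈ Icc u v, y s ≤ U) (huv : u ≤ v) :
    IntervalIntegrable y volume u v := by
  refine (intervalIntegrable_const (c := U)).mono_fun
    hy.aestronglyMeasurable ?_
  rw [uIoc_of_le huv]
  refine (ae_restrict_iff' measurableSet_Ioc).2 (Filter.Eventually.of_forall ?_)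
  intro s hs
  have h1 := hy0 s
  have h2 := hU s ⟨hs.1.le, hs.2⟩
  simp only [Real.norm_eq_abs, abs_of_nonneg h1]
  exact h2.trans (le_abs_self U)

lemma prod_II {p : ℝ} (hp : -1 < p) {y : ℝ → ℝ} (hy : Measurable y)
    {t u v U : ℝ} (huv : u ≤ v) (hvt : v ≤ t) (hU0 : 0 ≤ U)
    (hy0 : ∀ s, 0 ≤ y s) (hU : ∀ s ∈ Icc u v, y s ≤ U) :
    IntervalIntegrable (fun s => (t - s) ^ p * y s) volume u v := by
  have hk : IntervalIntegrable (fun s => U * (t - s) ^ p) volume u v :=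
    (kernel_II hp t u v).const_mul U
  refine hk.mono_fun (((kernel_II hp t u v).def'.aestronglyMeasurable.mul
    hy.aestronglyMeasurable)) ?_
  rw [uIoc_of_le huv]
  refine (ae_restrict_iff' measurableSet_Ioc).2 (Filter.Eventually.of_forall ?_)
  intro s hs
  have hts : 0 ≤ t - s := by linarith [hs.2]
  have hk0 : 0 ≤ (t - s) ^ p := Real.rpow_nonneg hts p
  have h1 := hy0 s
  have h2 := hU s ⟨hs.1.le, hs.2⟩
  simp only [Real.norm_eq_abs, abs_of_nonneg (mul_nonneg hk0 h1),
    abs_of_nonneg (mul_nonneg hU0 hk0)]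
  calc (t - s) ^ p * y s ≤ (t - s) ^ p * U := mul_le_mul_of_nonneg_left h2 hk0
    _ = U * (t - s) ^ p := mul_comm _ _

lemma kerbd {p : ℝ} (hp1 : -1 < p) (hp0 : p < 0) {δ t U : ℝ} (hδ : 0 < δ)
    (ht0 : 0 ≤ t) {y : ℝ → ℝ} (hy : Measurable y) (hy0 : ∀ s, 0 ≤ y s)
    (hU : ∀ s ∈ Icc (0:ℝ) t, y s ≤ U) :
    (∫ s in (0:ℝ)..t, (t - s) ^ p * y s)
      ≤ δ ^ p * (∫ s in (0:ℝ)..t, y s) + (δ ^ (p + 1) / (p + 1)) * U := by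
  have hU0 : 0 ≤ U := le_trans (hy0 0) (hU 0 ⟨le_rfl, ht0⟩)
  have hp1' : 0 < p + 1 := by linarith
  set m : ℝ := max (t - δ) 0 with hm
  have hm0 : 0 ≤ m := le_max_right _ _
  have hmt : m ≤ t := max_le (by linarith) ht0
  have htm : t - m ≤ δ := by
    have : t - δ ≤ m := le_max_left _ _
    linarith
  have hUsub : ∀ {u v : ℝ}, 0 ≤ u → v ≤ t → ∀ s ∈ Icc u v, y s ≤ U := by
    intro u v hu hv s hs
    exact hU s ⟨le_trans hu hs.1, le_trans hs.2 hv⟩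
  have i2 : IntervalIntegrable (fun s => (t - s) ^ p * y s) volume m t :=
    prod_II hp1 hy hmt le_rfl hU0 hy0 (hUsub hm0 le_rfl)
  have i2c : IntervalIntegrable (fun s => (t - s) ^ p * U) volume m t :=
    (kernel_II hp1 t m t).mul_const U
  have hnear : (∫ s in m..t, (t - s) ^ p * y s) ≤ (δ ^ (p + 1) / (p + 1)) * U := by
    have h1 : (∫ s in m..t, (t - s) ^ p * y s) ≤ ∫ s in m..t, (t - s) ^ p * U := by
      refine integral_mono_on hmt i2 i2c ?_
      intro s hs
      have hts : 0 ≤ t - s := by linarith [hs.2]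
      exact mul_le_mul_of_nonneg_left (hUsub hm0 le_rfl s hs) (Real.rpow_nonneg hts p)
    have h2 : (∫ s in m..t, (t - s) ^ p * U) = ((t - m) ^ (p + 1) / (p + 1)) * U := by
      rw [intervalIntegral.integral_mul_const, kernel_int hp1 hmt]
    have h3 : (t - m) ^ (p + 1) ≤ δ ^ (p + 1) :=
      Real.rpow_le_rpow (by linarith) htm hp1'.le
    calc (∫ s in m..t, (t - s) ^ p * y s) ≤ ((t - m) ^ (p + 1) / (p + 1)) * U :=
          h1.trans_eq h2
      _ ≤ (δ ^ (p + 1) / (p + 1)) * U :=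
          mul_le_mul_of_nonneg_right ((div_le_div_iff_of_pos_right hp1').2 h3) hU0
  rcases le_or_gt t δ with hcase | hcase
  · have hm' : m = 0 := max_eq_right (by linarith)
    have hInn : (0:ℝ) ≤ ∫ s in (0:ℝ)..t, y s :=
      intervalIntegral.integral_nonneg ht0 (fun s _ => hy0 s)
    have hδp : 0 ≤ δ ^ p := Real.rpow_nonneg hδ.le p
    rw [hm'] at hnear
    nlinarith [mul_nonneg hδp hInn]
  · have hm' : m = t - δ := max_eq_left (by linarith)
    have i1 : IntervalIntegrable (fun s => (t - s) ^ p * y s) volume 0 m :=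
      prod_II hp1 hy hm0 hmt hU0 hy0 (hUsub le_rfl hmt)
    have iy1 : IntervalIntegrable y volume 0 m := yII hy hy0 (hUsub le_rfl hmt) hm0
    have iy2 : IntervalIntegrable y volume m t := yII hy hy0 (hUsub hm0 le_rfl) hmt
    have hsplit : (∫ s in (0:ℝ)..t, (t - s) ^ p * y s)
        = (∫ s in (0:ℝ)..m, (t - s) ^ p * y s) + ∫ s in m..t, (t - s) ^ p * y s :=
      (intervalIntegral.integral_add_adjacent_intervals i1 i2).symm
    have hfar : (∫ s in (0:ℝ)..m, (t - s) ^ p * y s) ≤ δ ^ p * ∫ s in (0:ℝ)..m, y s := by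
      have h1 : (∫ s in (0:ℝ)..m, (t - s) ^ p * y s) ≤ ∫ s in (0:ℝ)..m, δ ^ p * y s := by
        refine integral_mono_on hm0 i1 (iy1.const_mul _) ?_
        intro s hs
        have hδts : δ ≤ t - s := by
          have h := hs.2; rw [hm'] at h; linarith
        exact mul_le_mul_of_nonneg_right
          (Real.rpow_le_rpow_of_nonpos hδ hδts hp0.le) (hy0 s)
      simpa [intervalIntegral.integral_const_mul] using h1
    have hmono : (∫ s in (0:ℝ)..m, y s) ≤ ∫ s in (0:ℝ)..t, y s := by
      have h2 : (0:ℝ) ≤ ∫ s in m..t, y s :=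
        intervalIntegral.integral_nonneg hmt (fun s _ => hy0 s)
      have h3 := intervalIntegral.integral_add_adjacent_intervals iy1 iy2
      linarith
    have hδp : 0 ≤ δ ^ p := Real.rpow_nonneg hδ.le p
    have h4 := mul_le_mul_of_nonneg_left hmono hδp
    rw [hsplit]
    linarith


lemma pow4_rpow {q : ℝ} (hq : 0 < q) (p : ℝ) : ((q ^ 4 : ℝ)) ^ p = q ^ (4 * p) := by
  rw [← Real.rpow_natCast q 4, ← Real.rpow_mul hq.le]
  norm_num

lemma rv1 {q : ℝ} (hq : 0 < q) : ((q ^ 4 : ℝ)) ^ (-(3:ℝ)/4) = (q ^ 3)⁻¹ := by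
  rw [pow4_rpow hq, show (4 * (-(3:ℝ)/4)) = -((3:ℕ):ℝ) by norm_num,
    Real.rpow_neg hq.le, Real.rpow_natCast]

lemma rv2 {q : ℝ} (hq : 0 < q) :
    ((q ^ 4 : ℝ)) ^ ((-(3:ℝ)/4) + 1) / ((-(3:ℝ)/4) + 1) = 4 * q := by
  rw [show ((-(3:ℝ)/4) + 1) = 1/4 by norm_num, pow4_rpow hq,
    show (4 * (1/4 : ℝ)) = 1 by norm_num, Real.rpow_one]
  ring

lemma rv3 {q : ℝ} (hq : 0 < q) : ((q ^ 4 : ℝ)) ^ (-(1:ℝ)/2) = (q ^ 2)⁻¹ := by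
  rw [pow4_rpow hq, show (4 * (-(1:ℝ)/2)) = -((2:ℕ):ℝ) by norm_num,
    Real.rpow_neg hq.le, Real.rpow_natCast]

lemma rv4 {q : ℝ} (hq : 0 < q) :
    ((q ^ 4 : ℝ)) ^ ((-(1:ℝ)/2) + 1) / ((-(1:ℝ)/2) + 1) = 2 * q ^ 2 := by
  rw [show ((-(1:ℝ)/2) + 1) = 1/2 by norm_num, pow4_rpow hq,
    show (4 * (1/2 : ℝ)) = ((2:ℕ):ℝ) by norm_num, Real.rpow_natCast]
  ring
end Stmt8Aux

open Stmt8Aux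


/-- Singular-kernel Gronwall inequality: if a bounded nonnegative `y` satisfies
`y(t) ≤ a + b∫₀ᵗ y + c∫₀ᵗ (t-s)^{-3/4} y(s) ds + d∫₀ᵗ (t-s)^{-1/2} y(s) ds`
on `[0,T]`, then `sup_{[0,T]} y ≤ C a` with `C = C(b,c,d,T)`. -/
theorem stmt_8 (b c d T : ℝ) (hb : 0 ≤ b) (hc : 0 ≤ c) (hd : 0 ≤ d) (hT : 0 ≤ T) :
    ∃ C > 0, ∀ (a : ℝ) (y : ℝ → ℝ), 0 ≤ a → Measurable y →
      (∀ t, 0 ≤ y t) → (∃ B, ∀ t ∈ Set.Icc (0 : ℝ) T, y t ≤ B) →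
      (∀ t ∈ Set.Icc (0 : ℝ) T,
        y t ≤ a + b * ∫ s in (0 : ℝ)..t, y s
            + c * ∫ s in (0 : ℝ)..t, (t - s) ^ (-(3 : ℝ) / 4) * y s
            + d * ∫ s in (0 : ℝ)..t, (t - s) ^ (-(1 : ℝ) / 2) * y s) →
      ∀ t ∈ Set.Icc (0 : ℝ) T, y t ≤ C * a := by
  set c1 := b*c*T with hc1def
  set d1 := b*c*d*T^2 with hd1def
  have hc10 : 0 ≤ c1 := by rw [hc1def]; positivity
  have hd10 : 0 ≤ d1 := by rw [hd1def]; positivity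
  set e := b + 5*c1 + 3*d1 with he
  have he0 : 0 ≤ e := by rw [he]; positivity
  set q := min 1 (2*e+1)⁻¹ with hqdef
  have hq0 : 0 < q := lt_min one_pos (inv_pos.2 (by linarith))
  have hq1 : q ≤ 1 := min_le_left _ _
  have heq : e * q ≤ 1/2 := by
    have h1 : q ≤ (2*e+1)⁻¹ := min_le_right _ _
    have h2 : e * q ≤ e * (2*e+1)⁻¹ := mul_le_mul_of_nonneg_left h1 he0
    have h3 : (0:ℝ) < 2*e+1 := by linarith
    have h4 : e * (2*e+1)⁻¹ ≤ 1/2 := by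
      rw [← div_eq_mul_inv, div_le_iff₀ h3]
      linarith
    linarith
  set δ := q^4 with hδdef
  have hδ0 : 0 < δ := by rw [hδdef]; positivity
  set K := b + c1 * (q^3)⁻¹ + d1 * (q^2)⁻¹ with hKdef
  have hK0 : 0 ≤ K := by
    rw [hKdef]
    have : 0 < (q^3)⁻¹ := by positivity
    have : 0 < (q^2)⁻¹ := by positivity
    positivity
  set G := 2 + 2*K*T with hGdef
  have hG2 : (2:ℝ) ≤ G := by rw [hGdef]; nlinarith [mul_nonneg hK0 hT]
  set N := ⌈T/δ⌉₊ with hN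
  clear_value c1 d1 e q δ K G N
  refine ⟨G^(N+1), pow_pos (by linarith : (0:ℝ) < G) _, ?_⟩
  rintro a y ha hy hy0 ⟨B, hB⟩ hineq
  set u : ℕ → ℝ := fun n => sSup (y '' Set.Icc 0 (min ((n:ℝ)*δ) T)) with hudef
  have hmem : ∀ n : ℕ, ∀ s : ℝ, 0 ≤ s → s ≤ T → s ≤ (n:ℝ)*δ → y s ≤ u n := by
    intro n s hs0 hsT hsn
    refine le_csSup ⟨B, ?_⟩ ⟨s, ⟨hs0, le_min hsn hsT⟩, rfl⟩
    rintro _ ⟨x, hx, rfl⟩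
    exact hB x ⟨hx.1, hx.2.trans (min_le_right _ _)⟩
  have hun0 : ∀ n, 0 ≤ u n := fun n =>
    le_trans (hy0 0) (hmem n 0 le_rfl hT (mul_nonneg (Nat.cast_nonneg n) hδ0.le))
  have hu_le : ∀ (n : ℕ) (M : ℝ),
      (∀ s : ℝ, 0 ≤ s → s ≤ T → s ≤ (n:ℝ)*δ → y s ≤ M) → u n ≤ M := by
    intro n M hM
    refine csSup_le ⟨y 0, ⟨0, ⟨le_rfl, le_min (mul_nonneg (Nat.cast_nonneg n) hδ0.le) hT⟩, rfl⟩⟩ ?_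
    rintro _ ⟨x, hx, rfl⟩
    exact hM x hx.1 (hx.2.trans (min_le_right _ _)) (hx.2.trans (min_le_left _ _))
  have key : ∀ n : ℕ, u (n+1) ≤ 2*a + 2*K*T*(u n) := by
    intro n
    have main : ∀ s : ℝ, 0 ≤ s → s ≤ T → s ≤ ((n:ℝ)+1)*δ →
        y s ≤ a + K*T*(u n) + (1/2)*(u (n+1)) := by
      intro t' ht'0 ht'T ht'δ
      have hUb : ∀ r ∈ Set.Icc (0:ℝ) t', y r ≤ u (n+1) := by
        intro r hr
        refine hmem (n+1) r hr.1 (hr.2.trans ht'T) ?_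
        push_cast
        linarith [hr.2.trans ht'δ]
      have hU0 : 0 ≤ u (n+1) := hun0 (n+1)
      have hV0 : 0 ≤ u n := hun0 n
      set I := ∫ s in (0:ℝ)..t', y s with hI
      have hI0 : 0 ≤ I := intervalIntegral.integral_nonneg ht'0 (fun s _ => hy0 s)
      have iy : IntervalIntegrable y volume 0 t' :=
        yII hy hy0 (fun s hs => hUb s hs) ht'0
      have i34 : IntervalIntegrable (fun s => (t' - s) ^ (-(3:ℝ)/4) * y s) volume 0 t' :=
        prod_II (by norm_num) hy ht'0 le_rfl hU0 hy0 hUb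
      have hIbd : I ≤ T*(u n) + δ*(u (n+1)) := by
        set m := min t' ((n:ℝ)*δ) with hm
        have hm0 : 0 ≤ m := le_min ht'0 (mul_nonneg (Nat.cast_nonneg n) hδ0.le)
        have hmt : m ≤ t' := min_le_left _ _
        have iy1 : IntervalIntegrable y volume 0 m :=
          yII hy hy0 (fun s hs => hUb s ⟨hs.1, hs.2.trans hmt⟩) hm0
        have iy2 : IntervalIntegrable y volume m t' :=
          yII hy hy0 (fun s hs => hUb s ⟨hm0.trans hs.1, hs.2⟩) hmt
        have h1 : (∫ s in (0:ℝ)..m, y s) ≤ m * (u n) := by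
          have h := integral_mono_on hm0 iy1
            (intervalIntegrable_const (c := u n)) ?_
          · simpa using h
          · intro s hs
            exact hmem n s hs.1 ((hs.2.trans hmt).trans ht'T)
              (hs.2.trans (min_le_right _ _))
        have h2 : (∫ s in m..t', y s) ≤ (t' - m) * (u (n+1)) := by
          have h := integral_mono_on hmt iy2
            (intervalIntegrable_const (c := u (n+1))) ?_
          · simpa using h
          · intro s hs; exact hUb s ⟨hm0.trans hs.1, hs.2⟩
        have hsplit := intervalIntegral.integral_add_adjacent_intervals iy1 iy2
        have hmT : m ≤ T := hmt.trans ht'T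
        have htm : t' - m ≤ δ := by
          rcases le_total t' ((n:ℝ)*δ) with h | h
          · rw [hm, min_eq_left h]; linarith [hδ0.le]
          · rw [hm, min_eq_right h]
            have : ((n:ℝ)+1)*δ = (n:ℝ)*δ + δ := by ring
            linarith
        calc I = (∫ s in (0:ℝ)..m, y s) + ∫ s in m..t', y s := by rw [hI, ← hsplit]
          _ ≤ m * (u n) + (t' - m) * (u (n+1)) := add_le_add h1 h2
          _ ≤ T*(u n) + δ*(u (n+1)) :=
            add_le_add (mul_le_mul_of_nonneg_right hmT hV0)
              (mul_le_mul_of_nonneg_right htm hU0)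
      -- unfold the nested integrals in the hypothesis
      have hyt := hineq t' ⟨ht'0, ht'T⟩
      set J2 := ∫ s in (0:ℝ)..t', (t' - s) ^ (-(1:ℝ)/2) * y s with hJ2
      have hmid : (∫ s in (0:ℝ)..t', ((t' - s) ^ (-(3:ℝ)/4) * y s + d * J2))
          = (∫ s in (0:ℝ)..t', (t' - s) ^ (-(3:ℝ)/4) * y s) + t' * (d * J2) := by
        rw [intervalIntegral.integral_add i34
          (intervalIntegrable_const (c := d * J2)),
          intervalIntegral.integral_const, smul_eq_mul, sub_zero]
      rw [hmid] at hyt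
      set J1 := ∫ s in (0:ℝ)..t', (t' - s) ^ (-(3:ℝ)/4) * y s with hJ1
      have hout : (∫ s in (0:ℝ)..t', (y s + c * (J1 + t' * (d * J2))))
          = I + t' * (c * (J1 + t' * (d * J2))) := by
        rw [intervalIntegral.integral_add iy
          (intervalIntegrable_const (c := c * (J1 + t' * (d * J2)))),
          intervalIntegral.integral_const, smul_eq_mul, sub_zero, ← hI]
      rw [hout] at hyt
      -- hyt : y t' ≤ a + b * (I + t' * (c * (J1 + t' * (d * J2))))
      have hJ10 : 0 ≤ J1 := by
        rw [hJ1]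
        refine intervalIntegral.integral_nonneg ht'0 (fun s hs => ?_)
        exact mul_nonneg (Real.rpow_nonneg (by linarith [hs.2]) _) (hy0 s)
      have hJ20 : 0 ≤ J2 := by
        rw [hJ2]
        refine intervalIntegral.integral_nonneg ht'0 (fun s hs => ?_)
        exact mul_nonneg (Real.rpow_nonneg (by linarith [hs.2]) _) (hy0 s)
      have hflat : y t' ≤ a + b*I + c1*J1 + d1*J2 := by
        have hexp : a + b * (I + t' * (c * (J1 + t' * (d * J2))))
            = a + b*I + (b*c*t')*J1 + (b*c*d*t'^2)*J2 := by ring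
        have e1 : (b*c*t')*J1 ≤ c1*J1 := by
          refine mul_le_mul_of_nonneg_right ?_ hJ10
          rw [hc1def]
          exact mul_le_mul_of_nonneg_left ht'T (mul_nonneg hb hc)
        have e2 : (b*c*d*t'^2)*J2 ≤ d1*J2 := by
          refine mul_le_mul_of_nonneg_right ?_ hJ20
          rw [hd1def]
          have ht2 : t'^2 ≤ T^2 := pow_le_pow_left₀ ht'0 ht'T 2
          exact mul_le_mul_of_nonneg_left ht2 (by positivity)
        rw [hexp] at hyt
        linarith
      have kb1 := kerbd (p := -(3:ℝ)/4) (by norm_num) (by norm_num) hδ0 ht'0 hy hy0 hUb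
      have kb2 := kerbd (p := -(1:ℝ)/2) (by norm_num) (by norm_num) hδ0 ht'0 hy hy0 hUb
      rw [← hJ1, ← hI, hδdef, rv1 hq0, rv2 hq0] at kb1
      rw [← hJ2, ← hI, hδdef, rv3 hq0, rv4 hq0] at kb2
      have hc1' := mul_le_mul_of_nonneg_left kb1 hc10
      have hd1' := mul_le_mul_of_nonneg_left kb2 hd10
      have step1 : y t' ≤ a + b*I + c1*((q^3)⁻¹ * I + 4*q*(u (n+1)))
          + d1*((q^2)⁻¹ * I + 2*q^2*(u (n+1))) := by linarith
      have step2 : b*I + c1*((q^3)⁻¹ * I + 4*q*(u (n+1)))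
          + d1*((q^2)⁻¹ * I + 2*q^2*(u (n+1)))
          = K*I + (4*c1*q + 2*d1*q^2)*(u (n+1)) := by rw [hKdef]; ring
      have hKI : K*I ≤ K*(T*(u n) + δ*(u (n+1))) := mul_le_mul_of_nonneg_left hIbd hK0
      have hKδU : K*(T*(u n) + δ*(u (n+1)))
          = K*T*(u n) + (b*q^4 + c1*q + d1*q^2)*(u (n+1)) := by
        rw [hδdef, hKdef]
        field_simp
      have hq2q : q^2 ≤ q := by
        calc q^2 = q*q := sq q
          _ ≤ 1*q := mul_le_mul_of_nonneg_right hq1 hq0.le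
          _ = q := one_mul q
      have hq4q : q^4 ≤ q := by
        have h3 : q^3 ≤ 1 := pow_le_one₀ hq0.le hq1
        calc q^4 = q^3*q := by ring
          _ ≤ 1*q := mul_le_mul_of_nonneg_right h3 hq0.le
          _ = q := one_mul q
      have step4 : b*q^4 + c1*q + d1*q^2 + (4*c1*q + 2*d1*q^2) ≤ 1/2 := by
        have h1 : b*q^4 ≤ b*q := mul_le_mul_of_nonneg_left hq4q hb
        have h2 : d1*q^2 ≤ d1*q := mul_le_mul_of_nonneg_left hq2q hd10
        have h3 : e * q = b*q + 5*(c1*q) + 3*(d1*q) := by rw [he]; ring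
        linarith
      have hcoefU : (b*q^4 + c1*q + d1*q^2)*(u (n+1)) + (4*c1*q + 2*d1*q^2)*(u (n+1))
          ≤ (1/2)*(u (n+1)) := by
        have h1 : (b*q^4 + c1*q + d1*q^2)*(u (n+1)) + (4*c1*q + 2*d1*q^2)*(u (n+1))
            = (b*q^4 + c1*q + d1*q^2 + (4*c1*q + 2*d1*q^2))*(u (n+1)) := by ring
        rw [h1]
        exact mul_le_mul_of_nonneg_right step4 hU0
      linarith [hKI.trans_eq hKδU]
    have h : u (n+1) ≤ a + K*T*(u n) + (1/2)*(u (n+1)) := by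
      refine hu_le (n+1) _ ?_
      intro s hs0 hsT hsn
      refine main s hs0 hsT ?_
      push_cast at hsn
      linarith
    linarith [hun0 (n+1)]
  have hub : ∀ n : ℕ, u n ≤ G^(n+1) * a := by
    intro n
    induction n with
    | zero =>
      have h0 : y 0 ≤ a := by
        have h := hineq 0 ⟨le_rfl, hT⟩
        simpa using h
      have hu0 : u 0 ≤ a := by
        refine hu_le 0 a ?_
        intro s hs0 hsT hsn
        have hs : s = 0 := le_antisymm (by simpa using hsn) hs0
        rw [hs]; exact h0
      have hG1 : a ≤ G^(0+1)*a := by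
        have h1 : (1:ℝ) ≤ G^(0+1) := by simpa using (by linarith : (1:ℝ) ≤ G)
        have := mul_le_mul_of_nonneg_right h1 ha
        linarith
      linarith
    | succ n ih =>
      have hGp : (0:ℝ) ≤ G^(n+1) := pow_nonneg (by linarith) _
      have hKT : (0:ℝ) ≤ 2*K*T := mul_nonneg (mul_nonneg (by norm_num) hK0) hT
      have h2 : 2*K*T*(u n) ≤ 2*K*T*(G^(n+1)*a) := mul_le_mul_of_nonneg_left ih hKT
      have hpow1 : (1:ℝ) ≤ G^(n+1) := one_le_pow₀ (by linarith)
      have hx : G^(n+1+1)*a = 2*(G^(n+1)*a) + 2*K*T*(G^(n+1)*a) := by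
        rw [pow_succ, hGdef]; ring
      have h3 : 2*a + 2*K*T*(G^(n+1)*a) ≤ G^(n+1+1)*a := by
        have h4 : a ≤ G^(n+1)*a := by
          have := mul_le_mul_of_nonneg_right hpow1 ha
          linarith
        rw [hx]; linarith
      calc u (n+1) ≤ 2*a + 2*K*T*(u n) := key n
        _ ≤ 2*a + 2*K*T*(G^(n+1)*a) := by linarith
        _ ≤ G^(n+1+1)*a := h3
  intro t ht
  have hTN : T ≤ (N:ℝ)*δ := by
    have h1 : T/δ ≤ (N:ℝ) := by
      rw [hN]; exact_mod_cast Nat.le_ceil (T/δ)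
    calc T = (T/δ)*δ := by field_simp
      _ ≤ (N:ℝ)*δ := mul_le_mul_of_nonneg_right h1 hδ0.le
  have h := hmem N t ht.1 ht.2 (ht.2.trans hTN)
  calc y t ≤ u N := h
    _ ≤ G^(N+1)*a := hub N
end

section
/- Let (P_t)_{t≥0} be a Markov transition semigroup on a Polish space H that is strong Feller at some time t₀ > 0 and irreducible at some time s₀ > 0 (i.e., P_{s₀}(x,B) > 0 for every x ∈ H and every open ball B). Then P_t admits at most one invariant probability measure. -/
open MeasureTheory ProbabilityTheory
open scoped ENNReal

private lemma ennreal_add_cancel {a b c d : ℝ≥0∞} (h1 : a ≤ b) (h2 : c ≤ d)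
    (h : b + d = a + c) (hfin : b + d ≠ ⊤) : b = a ∧ d = c := by
  have hb : b ≠ ⊤ := fun h' => hfin (by simp [h'])
  have hdc : d ≤ c := by
    have : b + d ≤ b + c := h.le.trans (add_le_add_left h1 c)
    exact (ENNReal.add_le_add_iff_left hb).1 this
  have hdc' : d = c := le_antisymm hdc h2
  refine ⟨?_, hdc'⟩
  rw [hdc'] at h
  have hc : c ≠ ⊤ := fun h' => hfin (by simp [hdc', h'])
  have h' : c + b = c + a := by rw [add_comm c b, add_comm c a]; exact h
  exact (ENNReal.add_right_inj hc).1 h'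

/-- If `μ`, `ν` are finite invariant measures for a Markov kernel and `S` is a Hahn set
(`ν ≤ μ` on subsets of `S`, `μ ≤ ν` on subsets of `Sᶜ`), then the "positive part"
`μ.restrict S - ν.restrict S` is again invariant. -/
private lemma invariant_pos_part {H : Type*} [MeasurableSpace H]
    (κT : Kernel H H) [IsMarkovKernel κT]
    (μ ν : Measure H) [IsFiniteMeasure μ] [IsFiniteMeasure ν]
    (S : Set H) (hS : MeasurableSet S)
    (hinvμ : ∀ B, MeasurableSet B → ∫⁻ x, κT x B ∂μ = μ B)
    (hinvν : ∀ B, MeasurableSet B → ∫⁻ x, κT x B ∂ν = ν B)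
    (hle : ν.restrict S ≤ μ.restrict S)
    (hge : μ.restrict Sᶜ ≤ ν.restrict Sᶜ) :
    ∀ B, MeasurableSet B →
      ∫⁻ x, κT x B ∂(μ.restrict S - ν.restrict S) = (μ.restrict S - ν.restrict S) B := by
  set π : Measure H := μ.restrict S - ν.restrict S with hπdef
  set π' : Measure H := ν.restrict Sᶜ - μ.restrict Sᶜ with hπ'def
  have hπadd : π + ν.restrict S = μ.restrict S := Measure.sub_add_cancel_of_le hle
  have hπ'add : π' + μ.restrict Sᶜ = ν.restrict Sᶜ := Measure.sub_add_cancel_of_le hge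
  have hπS : ∀ A : Set H, MeasurableSet A → π A + ν (A ∩ S) = μ (A ∩ S) := by
    intro A hA
    have := congrArg (fun m : Measure H => m A) hπadd
    simpa [Measure.add_apply, Measure.restrict_apply hA] using this
  have hπ'S : ∀ A : Set H, MeasurableSet A → π' A + μ (A ∩ Sᶜ) = ν (A ∩ Sᶜ) := by
    intro A hA
    have := congrArg (fun m : Measure H => m A) hπ'add
    simpa [Measure.add_apply, Measure.restrict_apply hA] using this
  -- π vanishes on subsets of Sᶜ
  have hπzero : ∀ A : Set H, MeasurableSet A → A ⊆ Sᶜ → π A = 0 := by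
    intro A hA hAS
    have h := hπS A hA
    have hAe : A ∩ S = ∅ := by
      ext x; simp only [Set.mem_inter_iff, Set.mem_empty_iff_false, iff_false]
      rintro ⟨hx1, hx2⟩; exact hAS hx1 hx2
    rw [hAe] at h
    simpa using h
  -- the key measure identity μ + π' = ν + π
  have hkey : μ + π' = ν + π := by
    ext B hB
    simp only [Measure.add_apply]
    have h1 : μ (B ∩ S) + μ (B ∩ Sᶜ) = μ B := by
      simpa [Set.diff_eq] using measure_inter_add_diff B hS
    have h2 : ν (B ∩ S) + ν (B ∩ Sᶜ) = ν B := by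
      simpa [Set.diff_eq] using measure_inter_add_diff B hS
    calc μ B + π' B = (μ (B ∩ S) + μ (B ∩ Sᶜ)) + π' B := by rw [h1]
      _ = μ (B ∩ S) + (π' B + μ (B ∩ Sᶜ)) := by ring
      _ = μ (B ∩ S) + ν (B ∩ Sᶜ) := by rw [hπ'S B hB]
      _ = (π B + ν (B ∩ S)) + ν (B ∩ Sᶜ) := by rw [hπS B hB]
      _ = ν B + π B := by rw [add_assoc, h2]; ring
  -- notation for the pushed-forward measure evaluation
  have hLadd : ∀ B : Set H, MeasurableSet B →
      μ B + ∫⁻ x, κT x B ∂π' = ν B + ∫⁻ x, κT x B ∂π := by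
    intro B hB
    have : ∫⁻ x, κT x B ∂(μ + π') = ∫⁻ x, κT x B ∂(ν + π) := by rw [hkey]
    rw [lintegral_add_measure, lintegral_add_measure, hinvμ B hB, hinvν B hB] at this
    exact this
  -- step: π A ≤ Lπ A for measurable A ⊆ S
  have hstep : ∀ A : Set H, MeasurableSet A → A ⊆ S → π A ≤ ∫⁻ x, κT x A ∂π := by
    intro A hA hAS
    have hAe : A ∩ S = A := Set.inter_eq_self_of_subset_left hAS
    have hμA : π A + ν A = μ A := by have := hπS A hA; rwa [hAe] at this
    have h := hLadd A hA
    rw [← hμA] at h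
    -- π A + ν A + Lπ' A = ν A + Lπ A
    have h' : ν A + (π A + ∫⁻ x, κT x A ∂π') = ν A + ∫⁻ x, κT x A ∂π := by
      rw [← h]; ring
    have hνA : ν A ≠ ⊤ := measure_ne_top _ _
    have := (ENNReal.add_right_inj hνA).1 h'
    calc π A ≤ π A + ∫⁻ x, κT x A ∂π' := le_self_add
      _ = ∫⁻ x, κT x A ∂π := this
  -- π B ≤ Lπ B for all measurable B
  have hstep' : ∀ B : Set H, MeasurableSet B → π B ≤ ∫⁻ x, κT x B ∂π := by
    intro B hB
    have hsplit : π (B ∩ S) + π (B \ S) = π B := measure_inter_add_diff B hS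
    have h0 : π (B \ S) = 0 :=
      hπzero _ (hB.diff hS) (fun x hx => hx.2)
    have h1 : π B = π (B ∩ S) := by rw [← hsplit, h0, add_zero]
    calc π B = π (B ∩ S) := h1
      _ ≤ ∫⁻ x, κT x (B ∩ S) ∂π := hstep _ (hB.inter hS) Set.inter_subset_right
      _ ≤ ∫⁻ x, κT x B ∂π := lintegral_mono fun x => measure_mono Set.inter_subset_left
  -- total mass is preserved
  have hmass : ∫⁻ x, κT x Set.univ ∂π = π Set.univ := by
    simp [measure_univ]
  -- finiteness of π
  have hπfin : π Set.univ ≠ ⊤ := by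
    intro htop
    have h := hπS Set.univ MeasurableSet.univ
    rw [htop, Set.univ_inter, top_add] at h
    exact (measure_ne_top μ S) h.symm
  intro B hB
  have hcompl : π B + π Bᶜ = π Set.univ := measure_add_measure_compl hB
  have hL : (∫⁻ x, κT x B ∂π) + ∫⁻ x, κT x Bᶜ ∂π = π Set.univ := by
    rw [← lintegral_add_left (Kernel.measurable_coe κT hB), ← hmass]
    congr 1
    ext x
    exact measure_add_measure_compl hB
  have := ennreal_add_cancel (hstep' B hB) (hstep' Bᶜ hB.compl)
    (by rw [hL, hcompl]) (by rw [hL]; exact hπfin)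
  exact this.1

/-- Doob's uniqueness theorem: a Markov transition semigroup on a Polish space
which is strong Feller at some time `t₀ > 0` and irreducible at some time
`s₀ > 0` has at most one invariant probability measure. -/
theorem stmt_15 {H : Type*} [MetricSpace H] [TopologicalSpace.SeparableSpace H] [CompleteSpace H]
    [MeasurableSpace H] [BorelSpace H]
    (κ : ℝ → Kernel H H) (hκ : ∀ t, IsMarkovKernel (κ t))
    -- semigroup (Chapman–Kolmogorov) property
    (hsemi : ∀ s t : ℝ, 0 ≤ s → 0 ≤ t → κ (s + t) = (κ t).comp (κ s))
    (t₀ s₀ : ℝ) (ht₀ : 0 < t₀) (hs₀ : 0 < s₀)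
    -- strong Feller at time t₀
    (hSF : ∀ ψ : H → ℝ, Measurable ψ → (∃ Cψ, ∀ x, |ψ x| ≤ Cψ) →
      Continuous fun x => ∫ y, ψ y ∂(κ t₀ x))
    -- irreducibility at time s₀
    (hirr : ∀ x a : H, ∀ r : ℝ, 0 < r → 0 < κ s₀ x (Metric.ball a r))
    (μ ν : Measure H) [IsProbabilityMeasure μ] [IsProbabilityMeasure ν]
    (hμ : ∀ t : ℝ, 0 ≤ t → ∀ B : Set H, MeasurableSet B →
      ∫⁻ x, κ t x B ∂μ = μ B)
    (hν : ∀ t : ℝ, 0 ≤ t → ∀ B : Set H, MeasurableSet B →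
      ∫⁻ x, κ t x B ∂ν = ν B) :
    μ = ν := by
  haveI := hκ t₀
  haveI := hκ s₀
  haveI := hκ (s₀ + t₀)
  set T : ℝ := s₀ + t₀ with hTdef
  have hT : (0:ℝ) ≤ T := by positivity
  have hcomp : κ T = (κ t₀).comp (κ s₀) := hsemi s₀ t₀ hs₀.le ht₀.le
  -- Dichotomy: if κ T x₀ B > 0 for some x₀ then κ T x B > 0 for all x.
  have hdich : ∀ B : Set H, MeasurableSet B → (∃ x, κ T x B ≠ 0) → ∀ x, κ T x B ≠ 0 := by
    rintro B hB ⟨x₀, hx₀⟩ x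
    set ψ : H → ℝ := B.indicator fun _ => (1:ℝ) with hψdef
    have hψm : Measurable ψ := measurable_const.indicator hB
    have hψb : ∃ C, ∀ y, |ψ y| ≤ C := by
      refine ⟨1, fun y => ?_⟩
      by_cases h : y ∈ B <;> simp [hψdef, Set.indicator, h]
    have hφcont : Continuous fun y => ∫ z, ψ z ∂(κ t₀ y) := hSF ψ hψm hψb
    set φ : H → ℝ := fun y => ∫ z, ψ z ∂(κ t₀ y) with hφdef
    have hφeq : ∀ y, φ y = (κ t₀ y B).toReal := by
      intro y
      simp [hφdef, hψdef, integral_indicator_const (1:ℝ) hB, measureReal_def]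
    have hTapp : ∀ z, κ T z B = ∫⁻ y, κ t₀ y B ∂(κ s₀ z) := by
      intro z
      rw [hcomp, Kernel.comp_apply' _ _ _ hB]
    have hy₀ : ∃ y₀, κ t₀ y₀ B ≠ 0 := by
      by_contra h
      push_neg at h
      apply hx₀
      rw [hTapp x₀]
      simp [h]
    obtain ⟨y₀, hy₀⟩ := hy₀
    have hφy₀ : 0 < φ y₀ := by
      rw [hφeq y₀]
      exact ENNReal.toReal_pos hy₀ (measure_ne_top _ _)
    have hopen : IsOpen (φ ⁻¹' Set.Ioi (φ y₀ / 2)) := isOpen_Ioi.preimage hφcont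
    have hy₀mem : y₀ ∈ φ ⁻¹' Set.Ioi (φ y₀ / 2) := by
      simp only [Set.mem_preimage, Set.mem_Ioi]
      linarith
    obtain ⟨r, hr, hball⟩ := Metric.isOpen_iff.1 hopen y₀ hy₀mem
    have hlow : ∀ y ∈ Metric.ball y₀ r, ENNReal.ofReal (φ y₀ / 2) ≤ κ t₀ y B := by
      intro y hy
      have h2 : φ y₀ / 2 < φ y := hball hy
      calc ENNReal.ofReal (φ y₀ / 2) ≤ ENNReal.ofReal (φ y) := ENNReal.ofReal_le_ofReal h2.le
        _ = κ t₀ y B := by rw [hφeq y, ENNReal.ofReal_toReal (measure_ne_top _ _)]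
    have hlb : ENNReal.ofReal (φ y₀ / 2) * κ s₀ x (Metric.ball y₀ r) ≤ κ T x B := by
      rw [hTapp x, ← lintegral_indicator_const measurableSet_ball]
      refine lintegral_mono fun y => ?_
      by_cases h : y ∈ Metric.ball y₀ r
      · simpa [Set.indicator, h] using hlow y h
      · simp [Set.indicator, h]
    have hpos : 0 < ENNReal.ofReal (φ y₀ / 2) * κ s₀ x (Metric.ball y₀ r) := by
      apply ENNReal.mul_pos
      · exact (ENNReal.ofReal_pos.2 (by linarith)).ne'
      · exact (hirr x y₀ r hr).ne'
    exact (lt_of_lt_of_le hpos hlb).ne'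
  -- zero-set characterization for nonzero invariant measures
  have hzero : ∀ ρ : Measure H, ρ Set.univ ≠ 0 →
      (∀ B, MeasurableSet B → ∫⁻ x, κ T x B ∂ρ = ρ B) →
      ∀ B, MeasurableSet B → (ρ B = 0 ↔ ∀ x, κ T x B = 0) := by
    intro ρ hρ0 hinv B hB
    constructor
    · intro h
      have hint : ∫⁻ x, κ T x B ∂ρ = 0 := (hinv B hB).trans h
      rw [lintegral_eq_zero_iff (Kernel.measurable_coe _ hB)] at hint
      by_contra hne
      push_neg at hne
      have hall := hdich B hB hne
      have hfalse : ∀ᵐ x ∂ρ, False := by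
        filter_upwards [hint] with x hx
        exact hall x hx
      rw [ae_iff] at hfalse
      simp only [not_false_eq_true, Set.setOf_true] at hfalse
      exact hρ0 hfalse
    · intro h
      rw [← hinv B hB]
      simp [h]
  -- Hahn decomposition
  obtain ⟨S, hS, hSle, hSge⟩ := hahn_decomposition (μ := μ) (ν := ν)
  have hle : ν.restrict S ≤ μ.restrict S := by
    rw [Measure.le_iff]
    intro A hA
    rw [Measure.restrict_apply hA, Measure.restrict_apply hA]
    exact hSle _ (hA.inter hS) Set.inter_subset_right
  have hge : μ.restrict Sᶜ ≤ ν.restrict Sᶜ := by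
    rw [Measure.le_iff]
    intro A hA
    rw [Measure.restrict_apply hA, Measure.restrict_apply hA]
    exact hSge _ (hA.inter hS.compl) Set.inter_subset_right
  set π : Measure H := μ.restrict S - ν.restrict S with hπdef
  set π' : Measure H := ν.restrict Sᶜ - μ.restrict Sᶜ with hπ'def
  have hπadd : π + ν.restrict S = μ.restrict S := Measure.sub_add_cancel_of_le hle
  have hπ'add : π' + μ.restrict Sᶜ = ν.restrict Sᶜ := Measure.sub_add_cancel_of_le hge
  have hπS : ∀ A : Set H, MeasurableSet A → π A + ν (A ∩ S) = μ (A ∩ S) := by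
    intro A hA
    have := congrArg (fun m : Measure H => m A) hπadd
    simpa [Measure.add_apply, Measure.restrict_apply hA] using this
  have hπ'S : ∀ A : Set H, MeasurableSet A → π' A + μ (A ∩ Sᶜ) = ν (A ∩ Sᶜ) := by
    intro A hA
    have := congrArg (fun m : Measure H => m A) hπ'add
    simpa [Measure.add_apply, Measure.restrict_apply hA] using this
  by_cases hSeq : μ S = ν S
  · -- equal masses on the Hahn set: μ = ν
    have hScomp : μ Sᶜ = ν Sᶜ := by
      rw [measure_compl hS (measure_ne_top _ _), measure_compl hS (measure_ne_top _ _),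
        measure_univ, measure_univ, hSeq]
    ext A hA
    have h1 : ν (S ∩ A) ≤ μ (S ∩ A) := hSle _ (hS.inter hA) Set.inter_subset_left
    have h2 : ν (S \ A) ≤ μ (S \ A) := hSle _ (hS.diff hA) Set.diff_subset
    have hsum : μ (S ∩ A) + μ (S \ A) = ν (S ∩ A) + ν (S \ A) := by
      rw [measure_inter_add_diff S hA, measure_inter_add_diff S hA, hSeq]
    have hA1 := ennreal_add_cancel h1 h2 hsum
      (by rw [measure_inter_add_diff S hA]; exact measure_ne_top _ _)
    have h3 : μ (Sᶜ ∩ A) ≤ ν (Sᶜ ∩ A) := hSge _ (hS.compl.inter hA) Set.inter_subset_left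
    have h4 : μ (Sᶜ \ A) ≤ ν (Sᶜ \ A) := hSge _ (hS.compl.diff hA) Set.diff_subset
    have hsum' : ν (Sᶜ ∩ A) + ν (Sᶜ \ A) = μ (Sᶜ ∩ A) + μ (Sᶜ \ A) := by
      rw [measure_inter_add_diff Sᶜ hA, measure_inter_add_diff Sᶜ hA, hScomp]
    have hA2 := ennreal_add_cancel h3 h4 hsum'
      (by rw [measure_inter_add_diff Sᶜ hA]; exact measure_ne_top _ _)
    have hμA : μ (A ∩ S) + μ (A ∩ Sᶜ) = μ A := by
      simpa [Set.diff_eq] using measure_inter_add_diff A hS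
    have hνA : ν (A ∩ S) + ν (A ∩ Sᶜ) = ν A := by
      simpa [Set.diff_eq] using measure_inter_add_diff A hS
    rw [← hμA, ← hνA, Set.inter_comm A S, Set.inter_comm A Sᶜ, hA1.1, hA2.1]
  · -- unequal masses: contradiction with mutual singularity of π, π'
    exfalso
    have hinvμ : ∀ B, MeasurableSet B → ∫⁻ x, κ T x B ∂μ = μ B := fun B hB => hμ T hT B hB
    have hinvν : ∀ B, MeasurableSet B → ∫⁻ x, κ T x B ∂ν = ν B := fun B hB => hν T hT B hB
    have hπinv := invariant_pos_part (κ T) μ ν S hS hinvμ hinvν hle hge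
    have hπ'inv := invariant_pos_part (κ T) ν μ Sᶜ hS.compl hinvν hinvμ hge
      (by simpa [compl_compl] using hle)
    rw [← hπdef] at hπinv
    have hπ'eq : ν.restrict Sᶜ - μ.restrict Sᶜ = π' := rfl
    rw [hπ'eq] at hπ'inv
    -- π has nonzero mass
    have hπuniv : π Set.univ ≠ 0 := by
      intro h0
      have := hπS Set.univ MeasurableSet.univ
      rw [h0, zero_add, Set.univ_inter] at this
      exact hSeq this.symm
    -- π' has nonzero mass
    have hπ'univ : π' Set.univ ≠ 0 := by
      intro h0
      have := hπ'S Set.univ MeasurableSet.univ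
      rw [h0, zero_add, Set.univ_inter] at this
      -- μ Sᶜ = ν Sᶜ, so μ S = ν S
      apply hSeq
      have h1 : μ Sᶜ = ν Sᶜ := this
      have h2 : μ S = 1 - μ Sᶜ := by
        rw [measure_compl hS (measure_ne_top _ _), measure_univ]
        rw [ENNReal.sub_sub_cancel (by simp) (prob_le_one)]
      have h3 : ν S = 1 - ν Sᶜ := by
        rw [measure_compl hS (measure_ne_top _ _), measure_univ]
        rw [ENNReal.sub_sub_cancel (by simp) (prob_le_one)]
      rw [h2, h3, h1]
    have hzπ := hzero π hπuniv hπinv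
    have hzπ' := hzero π' hπ'univ hπ'inv
    -- π Sᶜ = 0
    have h1 : π Sᶜ = 0 := by
      have := hπS Sᶜ hS.compl
      rw [Set.compl_inter_self] at this
      simpa using this
    have h2 : ∀ x, κ T x Sᶜ = 0 := (hzπ Sᶜ hS.compl).1 h1
    have h3 : π' Sᶜ = 0 := (hzπ' Sᶜ hS.compl).2 h2
    have h4 : π' S = 0 := by
      have := hπ'S S hS
      rw [Set.inter_compl_self] at this
      simpa using this
    apply hπ'univ
    have : π' Set.univ = π' S + π' Sᶜ := by
      rw [← measure_add_measure_compl hS]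
    rw [this, h3, h4, add_zero]
end
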